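/- arXiv:2205.03151 — 9 statements merged into one kernel-verified Lean document; each statement's English description precedes it below -/
import Mathlib

section
/- Let SF = (A,R) be a SETAF, let E,E' ⊆ A be disjoint sets, and let SF^E = (A',R') be the E-reduct of SF. Assume E does not attack E' (i.e., not E ↦_R E') and E' ∈ cf(SF). Then E defends every element of E' in SF if and only if there is no S' ⊆ A' with S' ↦_{R'} E'. -/
/-! An attack `(T, a)` on an argument `a` outside the range of `E` survives in the
`E`-reduct, as `(T \ E, a)`, exactly when `E` does not counter-attack `T` (and `T ⊈ E`,
which holds automatically since `E` does not attack `a`). So `E` defends `a` iff no attack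
on `a` survives in the reduct. -/

/-- A SETAF: a finite set of arguments `A` together with an attack relation `R`
    whose elements are pairs `(T, h)` with nonempty tail `T ⊆ A` and head `h ∈ A`. -/
structure SETAF (α : Type*) where
  A : Set α
  R : Set (Set α × α)
  finA : A.Finite
  tail_nonempty : ∀ r ∈ R, (r.1 : Set α).Nonempty
  tail_subset : ∀ r ∈ R, r.1 ⊆ A
  head_mem : ∀ r ∈ R, r.2 ∈ A

namespace SETAF

variable {α : Type*}

/-- `S ↦_R a` : the set `S` attacks the argument `a`. -/
def attacksArg (SF : SETAF α) (S : Set α) (a : α) : Prop :=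
  ∃ T, T ⊆ S ∧ (T, a) ∈ SF.R

/-- `S ↦_R S'` : the set `S` attacks the set `S'`. -/
def attacksSet (SF : SETAF α) (S S' : Set α) : Prop :=
  ∃ a ∈ S', SF.attacksArg S a

/-- `S⁺_R`. -/
def plus (SF : SETAF α) (S : Set α) : Set α := {a | SF.attacksArg S a}

/-- The range `S⊕_R = S ∪ S⁺_R`. -/
def range (SF : SETAF α) (S : Set α) : Set α := S ∪ SF.plus S

/-- Conflict-free sets. -/
def cf (SF : SETAF α) : Set (Set α) :=
  {S | S ⊆ SF.A ∧ ∀ r ∈ SF.R, ¬ (r.1 ∪ {r.2} ⊆ S)}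

/-- `S` defends `a` : every attacker-set of `a` is counter-attacked by `S`. -/
def defends (SF : SETAF α) (S : Set α) (a : α) : Prop :=
  ∀ B ⊆ SF.A, SF.attacksArg B a → SF.attacksSet S B

/-- Admissible sets. -/
def adm (SF : SETAF α) : Set (Set α) :=
  {S | S ∈ SF.cf ∧ ∀ a ∈ S, SF.defends S a}

/-- Complete extensions. -/
def com (SF : SETAF α) : Set (Set α) :=
  {S | S ∈ SF.adm ∧ ∀ a ∈ SF.A, SF.defends S a → a ∈ S}

/-- Stable extensions. -/
def stb (SF : SETAF α) : Set (Set α) :=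
  {S | S ∈ SF.cf ∧ ∀ a ∈ SF.A \ S, SF.attacksArg S a}

/-- Preferred extensions. -/
def pref (SF : SETAF α) : Set (Set α) :=
  {S | S ∈ SF.adm ∧ ¬ ∃ T ∈ SF.adm, S ⊂ T}

/-- Semi-stable extensions. -/
def sem (SF : SETAF α) : Set (Set α) :=
  {S | S ∈ SF.adm ∧ ¬ ∃ T ∈ SF.adm, SF.range S ⊂ SF.range T}

/-- The `E`-reduct `SF^E` of a SETAF. -/
def reduct (SF : SETAF α) (E : Set α) : SETAF α where
  A := SF.A \ SF.range E
  R := {r | ∃ T h, (T, h) ∈ SF.R ∧ T ∩ SF.plus E = ∅ ∧ ¬ T ⊆ E ∧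
        h ∈ SF.A \ SF.range E ∧ r = (T \ E, h)}
  finA := SF.finA.subset Set.diff_subset
  tail_nonempty := by
    rintro r ⟨T, h, hR, hTE, hTsub, hh, rfl⟩
    exact Set.diff_nonempty.mpr hTsub
  tail_subset := by
    rintro r ⟨T, h, hR, hTE, hTsub, hh, rfl⟩
    rintro t ⟨htT, htE⟩
    refine ⟨SF.tail_subset (T, h) hR htT, ?_⟩
    rintro (hE | hplus)
    · exact htE hE
    · exact Set.eq_empty_iff_forall_notMem.mp hTE t ⟨htT, hplus⟩
  head_mem := by
    rintro r ⟨T, h, hR, hTE, hTsub, hh, rfl⟩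
    exact hh

/-- The restriction `SF↓_S^D` of a SETAF w.r.t. a set `S` and a set `D` of
    deleted (defeated) arguments. -/
def restrict (SF : SETAF α) (D S : Set α) : SETAF α where
  A := (SF.A ∩ S) \ D
  R := {r | ∃ T h, (T, h) ∈ SF.R ∧ h ∈ (SF.A ∩ S) \ D ∧ T ∩ D = ∅ ∧
        (T ∩ ((SF.A ∩ S) \ D)).Nonempty ∧ r = (T ∩ ((SF.A ∩ S) \ D), h)}
  finA := SF.finA.subset (fun a ha => ha.1.1)
  tail_nonempty := by
    rintro r ⟨T, h, _, _, _, hne, rfl⟩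
    exact hne
  tail_subset := by
    rintro r ⟨T, h, _, _, _, _, rfl⟩
    exact Set.inter_subset_right
  head_mem := by
    rintro r ⟨T, h, _, hh, _, _, rfl⟩
    exact hh

/-- Edge of the primal graph of a SETAF. -/
def primalEdge (SF : SETAF α) (t h : α) : Prop := ∃ T, (T, h) ∈ SF.R ∧ t ∈ T

/-- `a` influences `b` : there is a directed path from `a` to `b` in the primal graph. -/
def influences (SF : SETAF α) : α → α → Prop := Relation.ReflTransGen SF.primalEdge

/-- The strongly connected component of an argument in the primal graph. -/
def scc (SF : SETAF α) (a : α) : Set α :=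
  {b | SF.influences a b ∧ SF.influences b a}

/-- The strongly connected components of (the primal graph of) a SETAF. -/
def SCCs (SF : SETAF α) : Set (Set α) :=
  {S | ∃ a ∈ SF.A, S = SF.scc a}

/-- Defeated arguments of an SCC `S` w.r.t. `E`. -/
def Dscc (SF : SETAF α) (S E : Set α) : Set α :=
  {a ∈ S | SF.attacksArg (E \ S) a}

/-- Provisionally defeated arguments of an SCC `S` w.r.t. `E`. -/
def Pscc (SF : SETAF α) (S E : Set α) : Set α :=
  {a ∈ S | SF.attacksArg (SF.A \ (S ∪ SF.plus E)) a} \ SF.Dscc S E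

/-- Undefeated arguments of an SCC `S` w.r.t. `E`. -/
def Uscc (SF : SETAF α) (S E : Set α) : Set α :=
  S \ (SF.Dscc S E ∪ SF.Pscc S E)

/-- `UP_SF(S,E) = U_SF(S,E) ∪ P_SF(S,E)`. -/
def UPscc (SF : SETAF α) (S E : Set α) : Set α :=
  SF.Uscc S E ∪ SF.Pscc S E

/-- The mitigated attacks `M_SF(S,E)`. -/
def Mscc (SF : SETAF α) (S E : Set α) : Set (Set α × α) :=
  {r ∈ (SF.restrict (SF.plus (E \ S)) (SF.UPscc S E)).R |
    ∀ T', (T', r.2) ∈ SF.R → r.1 ⊆ T' → ¬ T' \ r.1 ⊆ E}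

/-- `a` is acceptable considering `M` w.r.t. `E` (in the given SETAF). -/
def acceptableM (SF : SETAF α) (M : Set (Set α × α)) (E : Set α) (a : α) : Prop :=
  ∀ T, (T, a) ∈ SF.R → ∃ X t, (X, t) ∈ SF.R ∧ (X, t) ∉ M ∧ X ⊆ E ∧ t ∈ T

/-- `adm(SF, C, M)` : admissible in `C` considering `M`. -/
def admCM (SF : SETAF α) (C : Set α) (M : Set (Set α × α)) : Set (Set α) :=
  {E | E ⊆ C ∧ E ∈ SF.cf ∧ ∀ a ∈ E, SF.acceptableM M E a}

/-- `com(SF, C, M)` : complete in `C` considering `M`. -/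
def comCM (SF : SETAF α) (C : Set α) (M : Set (Set α × α)) : Set (Set α) :=
  {E | E ∈ SF.admCM C M ∧ ∀ a ∈ C, SF.acceptableM M E a → a ∈ E}

/-- `pref(SF, C, M)` : preferred in `C` considering `M`. -/
def prefCM (SF : SETAF α) (C : Set α) (M : Set (Set α × α)) : Set (Set α) :=
  {E | E ∈ SF.admCM C M ∧ ¬ ∃ E' ∈ SF.admCM C M, E ⊂ E'}

/-- The characteristic function `F^M_{SF,C}` of `SF` in `C` considering `M`. -/
def charF (SF : SETAF α) (C : Set α) (M : Set (Set α × α)) (E : Set α) : Set α :=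
  {a ∈ C | SF.acceptableM M E a}

/-- The empty SETAF `(∅, ∅)`. -/
def emptySETAF (α : Type*) : SETAF α where
  A := ∅
  R := ∅
  finA := Set.finite_empty
  tail_nonempty := by simp
  tail_subset := by simp
  head_mem := by simp

variable (SF : SETAF α)

theorem attacksSet_mono_right {S B B' : Set α} (h : B ⊆ B') (hB : SF.attacksSet S B) :
    SF.attacksSet S B' :=
  let ⟨b, hb, hS⟩ := hB
  ⟨b, h hb, hS⟩

theorem inter_plus_eq_empty_iff (E T : Set α) : T ∩ SF.plus E = ∅ ↔ ¬ SF.attacksSet E T := by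
  simp only [Set.eq_empty_iff_forall_notMem, Set.mem_inter_iff, attacksSet, plus,
    Set.mem_ofPred_eq, not_exists, not_and]

theorem defends_iff_forall_tail (S : Set α) (a : α) :
    SF.defends S a ↔ ∀ T, (T, a) ∈ SF.R → SF.attacksSet S T := by
  constructor
  · intro hdef T hT
    exact hdef T (SF.tail_subset _ hT) ⟨T, subset_rfl, hT⟩
  · rintro htails B - ⟨T, hTB, hT⟩
    exact SF.attacksSet_mono_right hTB (htails T hT)

theorem attacksArg_reduct_iff (E : Set α) (a : α) :
    (∃ S' ⊆ (SF.reduct E).A, (SF.reduct E).attacksArg S' a) ↔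
      ∃ T, (T, a) ∈ SF.R ∧ ¬ SF.attacksSet E T ∧ ¬ T ⊆ E ∧ a ∉ SF.range E := by
  constructor
  · rintro ⟨S', -, T', -, T, h, hT, hTE, hTsub, ⟨-, ha⟩, heq⟩
    obtain ⟨rfl, rfl⟩ := Prod.mk.inj heq
    exact ⟨T, hT, (SF.inter_plus_eq_empty_iff E T).mp hTE, hTsub, ha⟩
  · rintro ⟨T, hT, hET, hTsub, ha⟩
    have hmem : (T \ E, a) ∈ (SF.reduct E).R :=
      ⟨T, a, hT, (SF.inter_plus_eq_empty_iff E T).mpr hET, hTsub, ⟨SF.head_mem _ hT, ha⟩, rfl⟩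
    exact ⟨T \ E, (SF.reduct E).tail_subset _ hmem, T \ E, subset_rfl, hmem⟩

theorem defends_iff_not_attacked_in_reduct {E : Set α} {a : α} (ha : a ∉ SF.range E) :
    SF.defends E a ↔ ¬ ∃ S' ⊆ (SF.reduct E).A, (SF.reduct E).attacksArg S' a := by
  rw [defends_iff_forall_tail, attacksArg_reduct_iff]
  constructor
  · rintro hdef ⟨T, hT, hET, -, -⟩
    exact hET (hdef T hT)
  · intro hno T hT
    by_contra hET
    exact hno ⟨T, hT, hET, fun hTE => ha (Or.inr ⟨T, hTE, hT⟩), ha⟩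

end SETAF

theorem stmt1_general {α : Type*} (SF : SETAF α) (E E' : Set α)
    (hdisj : Disjoint E E')
    (hnoatt : ¬ SF.attacksSet E E') :
    (∀ a ∈ E', SF.defends E a) ↔
      ¬ ∃ S', S' ⊆ (SF.reduct E).A ∧ (SF.reduct E).attacksSet S' E' := by
  have hrange : ∀ a ∈ E', a ∉ SF.range E := fun a ha hmem =>
    hmem.elim (fun haE => hdisj.ne_of_mem haE ha rfl) (fun hplus => hnoatt ⟨a, ha, hplus⟩)
  calc (∀ a ∈ E', SF.defends E a)
      ↔ ∀ a ∈ E', ¬ ∃ S' ⊆ (SF.reduct E).A, (SF.reduct E).attacksArg S' a :=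
        forall₂_congr fun a ha => SF.defends_iff_not_attacked_in_reduct (hrange a ha)
    _ ↔ ¬ ∃ S', S' ⊆ (SF.reduct E).A ∧ (SF.reduct E).attacksSet S' E' := by
        simp only [SETAF.attacksSet]
        grind

/-- Lemma 1(2): assume `E` does not attack the conflict-free set `E'`.  Then `E`
    defends every element of `E'` in `SF` iff no subset of the reduct's arguments
    attacks `E'` in `SF^E`. -/
theorem stmt1 {α : Type*} (SF : SETAF α) (E E' : Set α)
    (hE : E ⊆ SF.A) (hE' : E' ⊆ SF.A) (hdisj : Disjoint E E')
    (hnoatt : ¬ SF.attacksSet E E') (hcf : E' ∈ SF.cf) :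
    (∀ a ∈ E', SF.defends E a) ↔
      ¬ ∃ S', S' ⊆ (SF.reduct E).A ∧ (SF.reduct E).attacksSet S' E' :=
  stmt1_general SF E E' hdisj hnoatt
end

section
/- Let SF = (A,R) be a SETAF, let E,E' ⊆ A be disjoint sets, and let SF^E = (A',R') be the E-reduct of SF. If E ∈ cf(SF), E ∪ E' does not attack E in SF (i.e., not (E ∪ E') ↦_R E), E' ⊆ A', and E' ∈ cf(SF^E), then E ∪ E' ∈ cf(SF). -/
/-! An attack `(T, h)` inside `E ∪ E'` cannot hit `E`, by hypothesis. If it hits `h ∈ E'`, then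
`T` misses `E⁺` (which avoids `E`, as `E ∪ E'` does not attack `E`, and avoids `E' ⊆ A'`), and
`T ⊈ E` because `h ∉ E⁺`; so `(T \ E, h)` is an attack of `SF^E` inside `E'`. -/

namespace SETAF

variable {α : Type*} {SF : SETAF α}

theorem attacksArg.mono {S S' : Set α} {a : α} (h : SF.attacksArg S a) (hS : S ⊆ S') :
    SF.attacksArg S' a :=
  let ⟨T, hT, hR⟩ := h
  ⟨T, hT.trans hS, hR⟩

theorem disjoint_plus_of_not_attacksSet {S S' X : Set α} (h : ¬ SF.attacksSet S X)
    (hS' : S' ⊆ S) : Disjoint X (SF.plus S') :=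
  Set.disjoint_left.2 fun a ha hp => h ⟨a, ha, hp.mono hS'⟩

theorem disjoint_reduct_A_plus (E : Set α) : Disjoint (SF.reduct E).A (SF.plus E) :=
  Set.disjoint_left.2 fun _ ha hp => ha.2 (Or.inr hp)

theorem mem_reduct_R {E T : Set α} {h : α} (hR : (T, h) ∈ SF.R)
    (hT : Disjoint T (SF.plus E)) (hTE : ¬ T ⊆ E) (hh : h ∈ (SF.reduct E).A) :
    (T \ E, h) ∈ (SF.reduct E).R :=
  ⟨T, h, hR, Set.disjoint_iff_inter_eq_empty.1 hT, hTE, hh, rfl⟩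

end SETAF

theorem stmt2_general {α : Type*} (SF : SETAF α) (E E' : Set α)
    (hE : E ⊆ SF.A) (hE' : E' ⊆ SF.A)
    (hnoatt : ¬ SF.attacksSet (E ∪ E') E)
    (hsub : E' ⊆ (SF.reduct E).A) (hcf' : E' ∈ (SF.reduct E).cf) :
    E ∪ E' ∈ SF.cf := by
  refine ⟨Set.union_subset hE hE', ?_⟩
  rintro ⟨T, h⟩ hR hTh
  obtain ⟨hT, hh⟩ := Set.union_subset_iff.1 hTh
  rcases Set.singleton_subset_iff.1 hh with hhE | hhE'
  · exact hnoatt ⟨h, hhE, T, hT, hR⟩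
  have hTplus : Disjoint T (SF.plus E) :=
    ((SETAF.disjoint_plus_of_not_attacksSet hnoatt Set.subset_union_left).union_left
      ((SETAF.disjoint_reduct_A_plus E).mono_left hsub)).mono_left hT
  have hTE : ¬ T ⊆ E := fun hTE => (hsub hhE').2 (Or.inr ⟨T, hTE, hR⟩)
  refine hcf'.2 _ (SETAF.mem_reduct_R hR hTplus hTE (hsub hhE')) (Set.union_subset ?_ ?_)
  · exact fun t ht => (hT ht.1).resolve_left ht.2
  · exact Set.singleton_subset_iff.2 hhE'

/-- Lemma 1(3): if `E` is conflict-free, `E ∪ E'` does not attack `E` in `SF`,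
    `E' ⊆ A'` and `E'` is conflict-free in `SF^E`, then `E ∪ E'` is conflict-free
    in `SF`. -/
theorem stmt2 {α : Type*} (SF : SETAF α) (E E' : Set α)
    (hE : E ⊆ SF.A) (hE' : E' ⊆ SF.A) (hdisj : Disjoint E E')
    (hEcf : E ∈ SF.cf) (hnoatt : ¬ SF.attacksSet (E ∪ E') E)
    (hsub : E' ⊆ (SF.reduct E).A) (hcf' : E' ∈ (SF.reduct E).cf) :
    E ∪ E' ∈ SF.cf :=
  stmt2_general SF E E' hE hE' hnoatt hsub hcf'
end

section
/- Let SF = (A,R) be a SETAF and let E,E' ⊆ A be disjoint sets. If E ∪ E' ∈ cf(SF), then the (E ∪ E')-reduct of SF equals the E'-reduct of the E-reduct of SF, i.e., SF^{E∪E'} = (SF^E)^{E'}. -/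
/-! Since `E ∪ E'` is conflict-free, no attack with tail in `E ∪ E'` has a tail meeting `E⁺`.
Hence the arguments attacked by `E'` in `SF^E` are exactly those of `(E ∪ E')⁺ \ E⊕`, and the two
tail conditions `T ∩ E⁺ = ∅`, `(T \ E) ∩ (SF^E)⁺(E') = ∅` of the two-step reduct together say
`T ∩ (E ∪ E')⁺ = ∅`. -/

namespace SETAF

variable {α : Type*} (SF : SETAF α)

theorem ext {SF₁ SF₂ : SETAF α} (hA : SF₁.A = SF₂.A) (hR : SF₁.R = SF₂.R) :
    SF₁ = SF₂ := by
  cases SF₁; cases SF₂; cases hA; cases hR; rfl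

theorem plus_mono {S S' : Set α} (h : S ⊆ S') : SF.plus S ⊆ SF.plus S' :=
  fun _ ⟨T, hT, hR⟩ => ⟨T, hT.trans h, hR⟩

theorem range_mono {S S' : Set α} (h : S ⊆ S') : SF.range S ⊆ SF.range S' :=
  Set.union_subset_union h (SF.plus_mono h)

theorem disjoint_plus_of_mem_cf {S : Set α} (hS : S ∈ SF.cf) : Disjoint S (SF.plus S) :=
  Set.disjoint_left.mpr fun a ha ⟨T, hT, hR⟩ =>
    hS.2 (T, a) hR (Set.union_subset hT (Set.singleton_subset_iff.mpr ha))

variable {E E' : Set α}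

theorem reduct_plus_eq (hcf : E ∪ E' ∈ SF.cf) :
    (SF.reduct E).plus E' = SF.plus (E ∪ E') \ SF.range E := by
  ext a
  constructor
  · rintro ⟨_, hT'E', T, _, hR, -, -, ha, heq⟩
    obtain ⟨rfl, rfl⟩ := Prod.mk.inj heq
    exact ⟨⟨T, Set.sdiff_subset_iff.mp hT'E', hR⟩, ha.2⟩
  · rintro ⟨⟨T, hT, hR⟩, ha⟩
    have hTE : ¬ T ⊆ E := fun hTE => ha (Or.inr ⟨T, hTE, hR⟩)
    have hTplus : T ∩ SF.plus E = ∅ := Set.disjoint_iff_inter_eq_empty.mp <|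
      ((SF.disjoint_plus_of_mem_cf hcf).mono_left hT).mono_right
        (SF.plus_mono Set.subset_union_left)
    exact ⟨T \ E, Set.sdiff_subset_iff.mpr hT, T, a, hR, hTplus, hTE,
      ⟨SF.head_mem _ hR, ha⟩, rfl⟩

theorem reduct_union_A (hcf : E ∪ E' ∈ SF.cf) :
    (SF.reduct (E ∪ E')).A = ((SF.reduct E).reduct E').A := by
  have hplus : SF.plus E ⊆ SF.plus (E ∪ E') := SF.plus_mono Set.subset_union_left
  change SF.A \ SF.range (E ∪ E') = (SF.A \ SF.range E) \ (E' ∪ (SF.reduct E).plus E')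
  rw [SF.reduct_plus_eq hcf]
  ext a
  have := @hplus a
  simp only [range, Set.mem_sdiff, Set.mem_union]
  tauto

theorem inter_plus_union_eq_empty_iff (hcf : E ∪ E' ∈ SF.cf) (T : Set α) :
    T ∩ SF.plus (E ∪ E') = ∅ ↔
      T ∩ SF.plus E = ∅ ∧ (T \ E) ∩ (SF.reduct E).plus E' = ∅ := by
  have hplus : SF.plus E ⊆ SF.plus (E ∪ E') := SF.plus_mono Set.subset_union_left
  have hcf' := Set.disjoint_left.mp (SF.disjoint_plus_of_mem_cf hcf)
  rw [SF.reduct_plus_eq hcf]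
  simp only [Set.eq_empty_iff_forall_notMem, Set.mem_inter_iff, Set.mem_sdiff, range,
    Set.mem_union]
  constructor
  · intro h
    exact ⟨fun t ht => h t ⟨ht.1, hplus ht.2⟩, fun t ht => h t ⟨ht.1.1, ht.2.1⟩⟩
  · rintro ⟨hE, hE'⟩ t ⟨htT, htp⟩
    by_cases htE : t ∈ E
    · exact hcf' (Or.inl htE) htp
    · exact hE' t ⟨⟨htT, htE⟩, htp, fun h => h.elim htE fun h' => hE t ⟨htT, h'⟩⟩

theorem reduct_union_R (hcf : E ∪ E' ∈ SF.cf) :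
    (SF.reduct (E ∪ E')).R = ((SF.reduct E).reduct E').R := by
  have hA := SF.reduct_union_A hcf
  ext r
  constructor
  · rintro ⟨T, h, hR, hTplus, hTsub, hh, rfl⟩
    obtain ⟨hTE, hTE'⟩ := (SF.inter_plus_union_eq_empty_iff hcf T).mp hTplus
    have hhE : h ∈ SF.A \ SF.range E :=
      ⟨hh.1, fun h' => hh.2 (SF.range_mono Set.subset_union_left h')⟩
    exact ⟨T \ E, h,
      ⟨T, h, hR, hTE, fun hT => hTsub (hT.trans Set.subset_union_left), hhE, rfl⟩,
      hTE', fun hT => hTsub (Set.sdiff_subset_iff.mp hT), hA.subset hh, by rw [Set.sdiff_sdiff]⟩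
  · rintro ⟨_, h, ⟨T, _, hR, hTE, -, -, heq⟩, hTE', hTsub, hh, rfl⟩
    obtain ⟨rfl, rfl⟩ := Prod.mk.inj heq
    exact ⟨T, h, hR, (SF.inter_plus_union_eq_empty_iff hcf T).mpr ⟨hTE, hTE'⟩,
      fun hT => hTsub (Set.sdiff_subset_iff.mpr hT), hA.symm.subset hh, by rw [Set.sdiff_sdiff]⟩

end SETAF

theorem stmt4_general {α : Type*} (SF : SETAF α) (E E' : Set α)
    (hcf : E ∪ E' ∈ SF.cf) :
    SF.reduct (E ∪ E') = (SF.reduct E).reduct E' :=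
  SETAF.ext (SF.reduct_union_A hcf) (SF.reduct_union_R hcf)

/-- Lemma 1(5): if `E ∪ E'` is conflict-free, then `SF^{E ∪ E'} = (SF^E)^{E'}`. -/
theorem stmt4 {α : Type*} (SF : SETAF α) (E E' : Set α)
    (hE : E ⊆ SF.A) (hE' : E' ⊆ SF.A) (hdisj : Disjoint E E')
    (hcf : E ∪ E' ∈ SF.cf) :
    SF.reduct (E ∪ E') = (SF.reduct E).reduct E' :=
  stmt4_general SF E E' hcf
end

section
/- (Modularization.) Let SF = (A,R) be a SETAF, let σ ∈ {adm, com}, and let E ∈ σ(SF). Then: (1) if E' ∈ σ(SF^E), then E ∪ E' ∈ σ(SF); and (2) if E ∩ E' = ∅ and E ∪ E' ∈ σ(SF), then E' ∈ σ(SF^E). -/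
namespace SETAF

variable {α : Type*} {SF : SETAF α} {E E' S T : Set α} {a h : α}

lemma attacksArg.mono_s5 (hST : S ⊆ T) : SF.attacksArg S a → SF.attacksArg T a :=
  fun ⟨U, hU, hR⟩ => ⟨U, hU.trans hST, hR⟩

lemma defends.mono_s5 (hST : S ⊆ T) (hdef : SF.defends S a) : SF.defends T a := by
  intro B hB hatt
  obtain ⟨b, hb, hb'⟩ := hdef B hB hatt
  exact ⟨b, hb, hb'.mono_s5 hST⟩

lemma mem_cf_of_subset (hST : S ⊆ T) (hT : T ∈ SF.cf) : S ∈ SF.cf :=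
  ⟨hST.trans hT.1, fun r hr hsub => hT.2 r hr (hsub.trans hST)⟩

lemma not_attacksArg_of_mem_cf (hS : S ∈ SF.cf) (ha : a ∈ S) : ¬ SF.attacksArg S a :=
  fun ⟨_, hTS, hR⟩ => hS.2 _ hR (Set.union_subset hTS (Set.singleton_subset_iff.mpr ha))

lemma exists_of_mem_reduct_R (hR : (S, h) ∈ (SF.reduct E).R) :
    ∃ T, (T, h) ∈ SF.R ∧ S = T \ E := by
  obtain ⟨T, h', hT, -, -, -, heq⟩ := hR
  obtain ⟨rfl, rfl⟩ := Prod.mk.inj heq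
  exact ⟨T, hT, rfl⟩

lemma attacksSet_or_diff_mem_reduct_R (hR : (T, h) ∈ SF.R) (hh : h ∈ (SF.reduct E).A) :
    SF.attacksSet E T ∨ (T \ E, h) ∈ (SF.reduct E).R := by
  by_cases hT : (T ∩ SF.plus E).Nonempty
  · obtain ⟨t, htT, htE⟩ := hT
    exact Or.inl ⟨t, htT, htE⟩
  · exact Or.inr ⟨T, h, hR, Set.not_nonempty_iff_eq_empty.mp hT,
      fun hTE => hh.2 (Or.inr ⟨T, hTE, hR⟩), hh, rfl⟩

lemma diff_mem_reduct_R (hE : E ∈ SF.cf) (hE' : E' ⊆ (SF.reduct E).A) (hT : T ⊆ E ∪ E')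
    (hR : (T, h) ∈ SF.R) (hh : h ∈ (SF.reduct E).A) : (T \ E, h) ∈ (SF.reduct E).R := by
  refine (attacksSet_or_diff_mem_reduct_R hR hh).resolve_left ?_
  rintro ⟨t, htT, htE⟩
  rcases hT htT with ht | ht
  · exact not_attacksArg_of_mem_cf hE ht htE
  · exact (hE' ht).2 (Or.inr htE)

lemma subset_reduct_A_of_union_mem_cf (hdisj : E ∩ E' = ∅) (hcf : E ∪ E' ∈ SF.cf) :
    E' ⊆ (SF.reduct E).A := by
  intro a ha
  refine ⟨hcf.1 (Or.inr ha), ?_⟩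
  rintro (haE | haE)
  · exact Set.eq_empty_iff_forall_notMem.mp hdisj a ⟨haE, ha⟩
  · exact not_attacksArg_of_mem_cf hcf (Or.inr ha) (haE.mono_s5 Set.subset_union_left)

lemma mem_cf_reduct_of_union_mem_cf (hcf : E ∪ E' ∈ SF.cf) (hE' : E' ⊆ (SF.reduct E).A) :
    E' ∈ (SF.reduct E).cf := by
  refine ⟨hE', ?_⟩
  rintro ⟨S, h⟩ hR hsub
  obtain ⟨T, hT, rfl⟩ := exists_of_mem_reduct_R hR
  rw [Set.union_subset_iff, Set.singleton_subset_iff, Set.sdiff_subset_iff] at hsub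
  exact hcf.2 _ hT (Set.union_subset hsub.1 (Set.singleton_subset_iff.mpr (Or.inr hsub.2)))

lemma union_mem_cf_of_mem_cf_reduct (hE : E ∈ SF.adm) (hE' : E' ∈ (SF.reduct E).cf) :
    E ∪ E' ∈ SF.cf := by
  refine ⟨Set.union_subset hE.1.1 fun a ha => (hE'.1 ha).1, ?_⟩
  rintro ⟨T, h⟩ hR hsub
  rw [Set.union_subset_iff, Set.singleton_subset_iff] at hsub
  obtain ⟨hT, hh | hh⟩ := hsub
  · obtain ⟨t, htT, htE⟩ := hE.2 h hh T (SF.tail_subset _ hR) ⟨T, subset_rfl, hR⟩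
    rcases hT htT with ht | ht
    · exact not_attacksArg_of_mem_cf hE.1 ht htE
    · exact (hE'.1 ht).2 (Or.inr htE)
  · exact hE'.2 _ (diff_mem_reduct_R hE.1 hE'.1 hT hR (hE'.1 hh))
      (Set.union_subset (Set.sdiff_subset_iff.mpr hT) (Set.singleton_subset_iff.mpr hh))

lemma defends_union_of_defends_reduct (ha : a ∈ (SF.reduct E).A)
    (hdef : (SF.reduct E).defends E' a) : SF.defends (E ∪ E') a := by
  rintro B hB ⟨T, hTB, hR⟩
  rcases attacksSet_or_diff_mem_reduct_R hR ha with ⟨t, htT, htE⟩ | hR'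
  · exact ⟨t, hTB htT, htE.mono_s5 Set.subset_union_left⟩
  · obtain ⟨t, htT, S, hSE', hSR⟩ :=
      hdef (T \ E) ((SF.reduct E).tail_subset _ hR') ⟨_, subset_rfl, hR'⟩
    obtain ⟨T₀, hT₀, rfl⟩ := exists_of_mem_reduct_R hSR
    exact ⟨t, hTB htT.1, T₀, Set.sdiff_subset_iff.mp hSE', hT₀⟩

lemma defends_reduct_of_defends_union (hcf : E ∪ E' ∈ SF.cf) (hE' : E' ⊆ (SF.reduct E).A)
    (hdef : SF.defends (E ∪ E') a) : (SF.reduct E).defends E' a := by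
  rintro B hB ⟨S, hSB, hSR⟩
  obtain ⟨T, hT, rfl⟩ := exists_of_mem_reduct_R hSR
  obtain ⟨t, htT, T₀, hT₀, hT₀R⟩ := hdef T (SF.tail_subset _ hT) ⟨T, subset_rfl, hT⟩
  have htE : t ∉ E := fun htE =>
    not_attacksArg_of_mem_cf hcf (Or.inl htE) ⟨T₀, hT₀, hT₀R⟩
  have htS : t ∈ T \ E := ⟨htT, htE⟩
  exact ⟨t, hSB htS, T₀ \ E, Set.sdiff_subset_iff.mpr hT₀,
    diff_mem_reduct_R (mem_cf_of_subset Set.subset_union_left hcf) hE' hT₀ hT₀R (hB (hSB htS))⟩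

lemma union_mem_adm_of_mem_adm_reduct (hE : E ∈ SF.adm) (hE' : E' ∈ (SF.reduct E).adm) :
    E ∪ E' ∈ SF.adm := by
  refine ⟨union_mem_cf_of_mem_cf_reduct hE hE'.1, fun a ha => ?_⟩
  rcases ha with ha | ha
  · exact (hE.2 a ha).mono_s5 Set.subset_union_left
  · exact defends_union_of_defends_reduct (hE'.1.1 ha) (hE'.2 a ha)

lemma mem_adm_reduct_of_union_mem_adm (hdisj : E ∩ E' = ∅) (hU : E ∪ E' ∈ SF.adm) :
    E' ∈ (SF.reduct E).adm := by
  have hE' := subset_reduct_A_of_union_mem_cf hdisj hU.1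
  exact ⟨mem_cf_reduct_of_union_mem_cf hU.1 hE',
    fun a ha => defends_reduct_of_defends_union hU.1 hE' (hU.2 a (Or.inr ha))⟩

lemma union_mem_com_of_mem_com_reduct (hE : E ∈ SF.adm) (hE' : E' ∈ (SF.reduct E).com) :
    E ∪ E' ∈ SF.com := by
  have hU := union_mem_adm_of_mem_adm_reduct hE hE'.1
  refine ⟨hU, fun a ha hdef => ?_⟩
  by_cases haE : a ∈ SF.range E
  · rcases haE with haE | ⟨T, hTE, hR⟩
    · exact Or.inl haE
    · obtain ⟨t, htT, htU⟩ := hdef T (SF.tail_subset _ hR) ⟨T, subset_rfl, hR⟩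
      exact (not_attacksArg_of_mem_cf hU.1 (Or.inl (hTE htT)) htU).elim
  · exact Or.inr (hE'.2 a ⟨ha, haE⟩ (defends_reduct_of_defends_union hU.1 hE'.1.1.1 hdef))

lemma mem_com_reduct_of_union_mem_com (hdisj : E ∩ E' = ∅) (hU : E ∪ E' ∈ SF.com) :
    E' ∈ (SF.reduct E).com :=
  ⟨mem_adm_reduct_of_union_mem_adm hdisj hU.1, fun a ha hdef =>
    (hU.2 a ha.1 (defends_union_of_defends_reduct ha hdef)).resolve_left
      fun haE => ha.2 (Or.inl haE)⟩

end SETAF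

/-- Modularization: for `σ ∈ {adm, com}` and `E ∈ σ(SF)`:
    (1) `E' ∈ σ(SF^E)` implies `E ∪ E' ∈ σ(SF)`, and
    (2) if `E ∩ E' = ∅` and `E ∪ E' ∈ σ(SF)` then `E' ∈ σ(SF^E)`. -/
theorem stmt5 {α : Type*} (SF : SETAF α)
    (σ : SETAF α → Set (Set α))
    (hσ : σ = SETAF.adm ∨ σ = SETAF.com)
    (E : Set α) (hE : E ∈ σ SF) :
    (∀ E', E' ∈ σ (SF.reduct E) → E ∪ E' ∈ σ SF) ∧
    (∀ E', E ∩ E' = ∅ → E ∪ E' ∈ σ SF → E' ∈ σ (SF.reduct E)) := by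
  rcases hσ with rfl | rfl
  · exact ⟨fun _ => SETAF.union_mem_adm_of_mem_adm_reduct hE,
      fun _ => SETAF.mem_adm_reduct_of_union_mem_adm⟩
  · exact ⟨fun _ => SETAF.union_mem_com_of_mem_com_reduct hE.1,
      fun _ => SETAF.mem_com_reduct_of_union_mem_com⟩
end

section
/- Let SF = (A,R) be a SETAF, E ∈ cf(SF), and SF^E = (A',R') the E-reduct of SF. Then E ∈ adm(SF) if and only if for every S ⊆ A with S ↦_R E it holds that S ∖ E ⊈ A'. -/
/-
A conflict-free set never attacks its own members, so for `S ⊆ A` the set `S ∖ E` leaves the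
reduct's arguments `A ∖ (E ∪ E⁺)` exactly when `S` contains an argument attacked by `E`.
The criterion therefore says that `E` counter-attacks every set attacking it, which is
admissibility.
-/

namespace SETAF

variable {α : Type*} {SF : SETAF α} {E S : Set α}

theorem disjoint_plus_of_mem_cf_s7 (hcf : E ∈ SF.cf) : Disjoint E (SF.plus E) := by
  refine Set.disjoint_left.mpr fun x hxE ⟨T, hTE, hTR⟩ => hcf.2 (T, x) hTR ?_
  exact Set.union_subset hTE (Set.singleton_subset_iff.mpr hxE)

theorem diff_subset_reduct_A_iff_not_attacksSet (hcf : E ∈ SF.cf) (hSA : S ⊆ SF.A) :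
    S \ E ⊆ (SF.reduct E).A ↔ ¬ SF.attacksSet E S := by
  constructor
  · rintro hsub ⟨x, hxS, hx⟩
    have hxE : x ∉ E := Set.disjoint_right.mp (disjoint_plus_of_mem_cf_s7 hcf) hx
    exact (hsub ⟨hxS, hxE⟩).2 (Or.inr hx)
  · rintro hnot x ⟨hxS, hxE⟩
    refine ⟨hSA hxS, ?_⟩
    rintro (hx | hx)
    · exact hxE hx
    · exact hnot ⟨x, hxS, hx⟩

theorem mem_adm_iff_counterattacks (hcf : E ∈ SF.cf) :
    E ∈ SF.adm ↔ ∀ S, S ⊆ SF.A → SF.attacksSet S E → SF.attacksSet E S := by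
  constructor
  · rintro ⟨-, hdef⟩ S hSA ⟨a, haE, hatk⟩
    exact hdef a haE S hSA hatk
  · exact fun h => ⟨hcf, fun a haE B hBA hatk => h B hBA ⟨a, haE, hatk⟩⟩

end SETAF

/-- Proposition 1(2): for conflict-free `E`, `E` is admissible iff every
    `S ⊆ A` attacking `E` satisfies `S ∖ E ⊈ A'`. -/
theorem stmt7 {α : Type*} (SF : SETAF α) (E : Set α) (hcf : E ∈ SF.cf) :
    E ∈ SF.adm ↔ ∀ S, S ⊆ SF.A → SF.attacksSet S E → ¬ (S \ E ⊆ (SF.reduct E).A) := by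
  rw [SETAF.mem_adm_iff_counterattacks hcf]
  refine forall_congr' fun S => forall_congr' fun hSA => ?_
  rw [SETAF.diff_subset_reduct_A_iff_not_attacksSet hcf hSA, not_not]
end

section
/- Let SF = (A,R) be a SETAF and E ∈ cf(SF). Then E ∈ com(SF) if and only if E ∈ adm(SF) and no argument of the E-reduct SF^E = (A',R') is unattacked in SF^E (an argument a ∈ A' is unattacked in SF^E if there is no (T,a) ∈ R'). -/
namespace SETAF

variable {α : Type*}

def Unattacked (SF : SETAF α) (a : α) : Prop := ¬ ∃ T, (T, a) ∈ SF.R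

theorem defends_iff {SF : SETAF α} {S : Set α} {a : α} :
    SF.defends S a ↔ ∀ T, (T, a) ∈ SF.R → (T ∩ SF.plus S).Nonempty := by
  constructor
  · intro hdef T hT
    obtain ⟨t, htT, htS⟩ := hdef T (SF.tail_subset _ hT) ⟨T, subset_rfl, hT⟩
    exact ⟨t, htT, htS⟩
  · rintro h B hB ⟨T, hTB, hT⟩
    obtain ⟨t, htT, htS⟩ := h T hT
    exact ⟨t, hTB htT, htS⟩

theorem notMem_plus_of_defends {SF : SETAF α} {E : Set α} {a : α} (hcf : E ∈ SF.cf)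
    (hdef : SF.defends E a) : a ∉ SF.plus E := by
  rintro ⟨T, hTE, hT⟩
  obtain ⟨t, htT, X, hXE, hX⟩ := defends_iff.1 hdef T hT
  exact hcf.2 (X, t) hX (Set.union_subset hXE (Set.singleton_subset_iff.2 (hTE htT)))

theorem unattacked_reduct_iff_defends {SF : SETAF α} {E : Set α} {a : α}
    (ha : a ∈ (SF.reduct E).A) : (SF.reduct E).Unattacked a ↔ SF.defends E a := by
  rw [defends_iff, Unattacked, not_exists]
  constructor
  · intro hun T hT
    by_contra hdisj
    have hTE : ¬ T ⊆ E := fun hTE => ha.2 (Or.inr ⟨T, hTE, hT⟩)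
    exact hun (T \ E) ⟨T, a, hT, Set.not_nonempty_iff_eq_empty.1 hdisj, hTE, ha, rfl⟩
  · rintro hdef _ ⟨T, h, hT, hdisj, -, -, heq⟩
    obtain rfl : a = h := congrArg Prod.snd heq
    exact (Set.nonempty_iff_ne_empty.1 (hdef T hT)) hdisj

end SETAF

theorem stmt9_general {α : Type*} (SF : SETAF α) (E : Set α) :
    E ∈ SF.com ↔ E ∈ SF.adm ∧
      ¬ ∃ a ∈ (SF.reduct E).A, ¬ ∃ T, (T, a) ∈ (SF.reduct E).R := by
  constructor
  · rintro ⟨hadm, hcomplete⟩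
    refine ⟨hadm, fun ⟨a, ha, hun⟩ => ha.2 (Or.inl (hcomplete a ha.1 ?_))⟩
    exact (SETAF.unattacked_reduct_iff_defends ha).1 hun
  · rintro ⟨hadm, hno⟩
    refine ⟨hadm, fun a haA hdef => ?_⟩
    by_contra haE
    have ha : a ∈ (SF.reduct E).A :=
      ⟨haA, fun h => h.elim haE (SETAF.notMem_plus_of_defends hadm.1 hdef)⟩
    exact hno ⟨a, ha, (SETAF.unattacked_reduct_iff_defends ha).2 hdef⟩

/-- Proposition 1(4): for conflict-free `E`, `E` is complete iff `E` is
    admissible and no argument of `SF^E` is unattacked in `SF^E`. -/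
theorem stmt9 {α : Type*} (SF : SETAF α) (E : Set α) (hcf : E ∈ SF.cf) :
    E ∈ SF.com ↔ E ∈ SF.adm ∧
      ¬ ∃ a ∈ (SF.reduct E).A, ¬ ∃ T, (T, a) ∈ (SF.reduct E).R :=
  stmt9_general SF E
end

section
/- Let SF = (A,R) be a SETAF and let E,S ⊆ A. Then the restriction of SF with respect to S and (E ∖ S)⁺_R equals the restriction of the (E ∖ S)-reduct of SF with respect to S and ∅, i.e., SF↓_S^{(E∖S)⁺_R} = (SF^{E∖S})↓_S^∅. -/
/-! For `E` disjoint from `S` (such as `E ∖ S`), the arguments of `SF^E` inside `S` are exactly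
those of `S` not attacked by `E`, and since these avoid `E`, cutting `E` out of a tail does not
change its trace on them. The reduct's extra side condition `T ⊈ E` is implied by the restriction's
requirement that the tail meets `S ∖ E⁺`. -/

namespace SETAF

variable {α : Type*}

theorem ext_of_A_R {X Y : SETAF α} (hA : X.A = Y.A) (hR : X.R = Y.R) : X = Y := by
  cases X; cases Y; congr

theorem reduct_A_inter_of_disjoint (SF : SETAF α) {E S : Set α} (hES : Disjoint E S) :
    (SF.reduct E).A ∩ S = (SF.A ∩ S) \ SF.plus E := by
  ext a
  simp only [reduct, range, Set.mem_inter_iff, Set.mem_sdiff, Set.mem_union, not_or]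
  exact ⟨fun ⟨⟨hA, _, hplus⟩, hS⟩ => ⟨⟨hA, hS⟩, hplus⟩,
    fun ⟨⟨hA, hS⟩, hplus⟩ => ⟨⟨hA, fun hE => hES.ne_of_mem hE hS rfl, hplus⟩, hS⟩⟩

theorem restrict_plus_eq_restrict_reduct (SF : SETAF α) {E S : Set α} (hES : Disjoint E S) :
    SF.restrict (SF.plus E) S = (SF.reduct E).restrict ∅ S := by
  set C := (SF.A ∩ S) \ SF.plus E
  have hA : ((SF.reduct E).A ∩ S) \ ∅ = C := by
    rw [Set.sdiff_empty, reduct_A_inter_of_disjoint SF hES]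
  have hEC : Disjoint E C := hES.mono_right fun _ ha => ha.1.2
  have htail (T : Set α) : (T \ E) ∩ C = T ∩ C := by
    rw [← Set.inter_sdiff_right_comm, (hEC.symm.mono_left Set.inter_subset_right).sdiff_eq_left]
  have hC : C ⊆ (SF.reduct E).A := by
    rw [← hA]
    exact fun _ ha => ha.1.1
  refine ext_of_A_R hA.symm ?_
  ext r
  simp only [restrict, hA]
  constructor
  · rintro ⟨T, h, hR, hh, hTD, hne, rfl⟩
    have hTE : ¬T ⊆ E := fun hsub =>
      hEC.ne_of_mem (hsub hne.some_mem.1) hne.some_mem.2 rfl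
    refine ⟨T \ E, h, ⟨T, h, hR, hTD, hTE, hC hh, rfl⟩, hh, Set.inter_empty _, ?_, ?_⟩
    · rwa [htail]
    · rw [htail]
  · rintro ⟨_, _, ⟨T, h, hR, hTD, -, -, heq⟩, hh, -, hne, rfl⟩
    obtain ⟨rfl, rfl⟩ := Prod.mk.inj heq
    rw [htail] at hne ⊢
    exact ⟨T, _, hR, hh, hTD, hne, rfl⟩

end SETAF

theorem stmt11_general {α : Type*} (SF : SETAF α) (E S : Set α) :
    SF.restrict (SF.plus (E \ S)) S = (SF.reduct (E \ S)).restrict ∅ S :=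
  SF.restrict_plus_eq_restrict_reduct Set.disjoint_sdiff_left

/-- Lemma 2: `SF↓_S^{(E∖S)⁺} = (SF^{E∖S})↓_S^∅`. -/
theorem stmt11 {α : Type*} (SF : SETAF α) (E S : Set α)
    (hE : E ⊆ SF.A) (hS : S ⊆ SF.A) :
    SF.restrict (SF.plus (E \ S)) S = (SF.reduct (E \ S)).restrict ∅ S :=
  stmt11_general SF E S
end

section
/- Let SF = (A,R) be a SETAF, let E ∈ adm(SF), and let a be an argument that is acceptable w.r.t. E in SF (i.e., defended by E), lying in the SCC S ∈ SCCs(SF). Then a ∈ U_SF(S,E), the argument a is acceptable w.r.t. (E ∩ S) in SF↓_{UP_SF(S,E)}^{(E∖S)⁺_R} considering M_SF(S,E), and (E ∩ S) is conflict-free in SF↓_{UP_SF(S,E)}^{(E∖S)⁺_R}. -/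
/-
A counterattack `(X, t)` by `E` on an attacker of `h ∈ S` that survives the deletion of
`(E ∖ S)⁺` must come from a tail `X` meeting `S`; then `X ∩ S → t → h` is a path through
`t` between two vertices of the SCC `S`, so `t ∈ S`. Hence every defence that `E` provides
for an argument of `S` is still available inside `SF↓_{UP(S,E)}^{(E∖S)⁺}`, restricted to
`E ∩ S`, and it is not mitigated because its full tail lies in `E`.
-/

namespace SETAF

variable {α : Type*} {SF : SETAF α} {E S X T : Set α} {x t h : α}

/-- `SF↓_{UP_SF(S,E)}^{(E∖S)⁺_R}`. -/
abbrev sccRestrict (SF : SETAF α) (S E : Set α) : SETAF α :=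
  SF.restrict (SF.plus (E \ S)) (SF.UPscc S E)

lemma not_attacksArg_of_mem_cf_s16 (hcf : E ∈ SF.cf) (hX : X ⊆ E) (hx : x ∈ E) :
    ¬ SF.attacksArg X x := by
  rintro ⟨Y, hYX, hYx⟩
  exact hcf.2 (Y, x) hYx (Set.union_subset (hYX.trans hX) (Set.singleton_subset_iff.2 hx))

lemma not_attacksArg_of_defends (hcf : E ∈ SF.cf) (ha : SF.defends E x) (hX : X ⊆ E) :
    ¬ SF.attacksArg X x := fun hXx => by
  obtain ⟨y, hyX, hEy⟩ := ha X (hX.trans hcf.1) hXx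
  exact not_attacksArg_of_mem_cf_s16 hcf le_rfl (hX hyX) hEy

lemma mem_UPscc_iff : x ∈ SF.UPscc S E ↔ x ∈ S ∧ x ∉ SF.plus (E \ S) := by
  simp only [UPscc, Uscc, Pscc, Dscc, plus, Set.mem_union, Set.mem_sdiff,
    Set.mem_ofPred_eq]
  tauto

lemma mem_sccRestrict_A_iff :
    x ∈ (SF.sccRestrict S E).A ↔ x ∈ SF.A ∧ x ∈ S ∧ x ∉ SF.plus (E \ S) := by
  simp only [sccRestrict, restrict, Set.mem_sdiff, Set.mem_inter_iff, mem_UPscc_iff]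
  tauto

lemma inter_sccRestrict_A_subset_inter :
    X ∩ (SF.sccRestrict S E).A ⊆ X ∩ S :=
  fun _ hx => ⟨hx.1, (mem_sccRestrict_A_iff.1 hx.2).2.1⟩

lemma exists_mem_of_not_mem_plus_diff (hXt : (X, t) ∈ SF.R) (hXE : X ⊆ E)
    (ht : t ∉ SF.plus (E \ S)) : ∃ x ∈ X, x ∈ S := by
  by_contra! hXS
  exact ht ⟨X, fun y hy => ⟨hXE hy, hXS y hy⟩, hXt⟩

lemma mem_of_influences_of_influences (hS : S ∈ SF.SCCs) (hx : x ∈ S) (hh : h ∈ S)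
    (hxt : SF.influences x t) (hth : SF.influences t h) : t ∈ S := by
  obtain ⟨b, -, rfl⟩ := hS
  exact ⟨hx.1.trans hxt, hth.trans hh.2⟩

lemma exists_counterattack_sccRestrict (hcf : E ∈ SF.cf) (hS : S ∈ SF.SCCs)
    (hTh : (T, h) ∈ SF.R) (hhS : h ∈ S) (hTD : T ∩ SF.plus (E \ S) = ∅)
    (hdef : SF.defends E h) :
    ∃ t ∈ T ∩ (SF.sccRestrict S E).A, ∃ X ⊆ E,
      (X, t) ∈ SF.R ∧ (X ∩ (SF.sccRestrict S E).A, t) ∈ (SF.sccRestrict S E).R := by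
  obtain ⟨t, htT, X, hXE, hXt⟩ := hdef T (SF.tail_subset _ hTh) ⟨T, le_rfl, hTh⟩
  have htD : t ∉ SF.plus (E \ S) := fun htD => hTD.subset ⟨htT, htD⟩
  obtain ⟨x, hxX, hxS⟩ := exists_mem_of_not_mem_plus_diff hXt hXE htD
  have htS : t ∈ S := mem_of_influences_of_influences hS hxS hhS
    (.single ⟨X, hXt, hxX⟩) (.single ⟨T, hTh, htT⟩)
  have hXD : ∀ y ∈ X, y ∉ SF.plus (E \ S) := fun y hy =>
    not_attacksArg_of_mem_cf_s16 hcf Set.sdiff_subset (hXE hy)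
  have htC : t ∈ (SF.sccRestrict S E).A :=
    mem_sccRestrict_A_iff.2 ⟨SF.head_mem _ hXt, htS, htD⟩
  have hxC : x ∈ (SF.sccRestrict S E).A :=
    mem_sccRestrict_A_iff.2 ⟨hcf.1 (hXE hxX), hxS, hXD x hxX⟩
  exact ⟨t, ⟨htT, htC⟩, X, hXE, hXt,
    X, t, hXt, htC, Set.eq_empty_of_forall_notMem fun y hy => hXD y hy.1 hy.2,
    ⟨x, hxX, hxC⟩, rfl⟩

lemma mem_Uscc_of_defends (hcf : E ∈ SF.cf) (ha : SF.defends E x) (hxS : x ∈ S) :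
    x ∈ SF.Uscc S E := by
  refine ⟨hxS, ?_⟩
  rintro (⟨-, hED⟩ | ⟨⟨-, T, hTsub, hTx⟩, -⟩)
  · exact not_attacksArg_of_defends hcf ha Set.sdiff_subset hED
  · obtain ⟨t, htT, hEt⟩ := ha T (hTsub.trans Set.sdiff_subset) ⟨T, le_rfl, hTx⟩
    exact (hTsub htT).2 (Or.inr hEt)

lemma acceptableM_sccRestrict_of_defends (hcf : E ∈ SF.cf) (hS : S ∈ SF.SCCs)
    (ha : SF.defends E x) (hxS : x ∈ S) :
    (SF.sccRestrict S E).acceptableM (SF.Mscc S E) (E ∩ S) x := by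
  rintro _ ⟨T, _, hTx, -, hTD, -, hT⟩
  obtain ⟨rfl, rfl⟩ := Prod.mk.inj hT
  obtain ⟨t, htT, X, hXE, hXt, hXtC⟩ := exists_counterattack_sccRestrict hcf hS hTx hxS hTD ha
  refine ⟨_, t, hXtC, fun hM => ?_, ?_, htT⟩
  · exact hM.2 X hXt Set.inter_subset_left fun y hy => hXE hy.1
  · exact inter_sccRestrict_A_subset_inter.trans (Set.inter_subset_inter_left S hXE)

lemma inter_mem_cf_sccRestrict (hE : E ∈ SF.adm) (hS : S ∈ SF.SCCs) :
    E ∩ S ∈ (SF.sccRestrict S E).cf := by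
  obtain ⟨hcf, hdef⟩ := hE
  refine ⟨fun y ⟨hyE, hyS⟩ => mem_sccRestrict_A_iff.2
      ⟨hcf.1 hyE, hyS, not_attacksArg_of_mem_cf_s16 hcf Set.sdiff_subset hyE⟩, ?_⟩
  rintro _ ⟨T, h, hTh, -, hTD, -, rfl⟩ hsub
  have hhES : h ∈ E ∩ S := hsub (Or.inr rfl)
  obtain ⟨t, htT, X, hXE, hXt, -⟩ :=
    exists_counterattack_sccRestrict hcf hS hTh hhES.2 hTD (hdef h hhES.1)
  exact not_attacksArg_of_mem_cf_s16 hcf le_rfl (hsub (Or.inl htT)).1 ⟨X, hXE, hXt⟩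

end SETAF

/-- Lemma 4: if `E` is admissible and `a` (in SCC `S`) is defended by `E`, then
    `a ∈ U_SF(S,E)`, `a` is acceptable w.r.t. `E ∩ S` in the restriction
    considering `M_SF(S,E)`, and `E ∩ S` is conflict-free in the restriction. -/
theorem stmt16 {α : Type*} (SF : SETAF α) (E : Set α) (hE : E ∈ SF.adm)
    (a : α) (ha : SF.defends E a)
    (S : Set α) (hS : S ∈ SF.SCCs) (haS : a ∈ S) :
    a ∈ SF.Uscc S E ∧
    (SF.restrict (SF.plus (E \ S)) (SF.UPscc S E)).acceptableM
      (SF.Mscc S E) (E ∩ S) a ∧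
    E ∩ S ∈ (SF.restrict (SF.plus (E \ S)) (SF.UPscc S E)).cf :=
  ⟨SETAF.mem_Uscc_of_defends hE.1 ha haS,
    SETAF.acceptableM_sccRestrict_of_defends hE.1 hS ha haS,
    SETAF.inter_mem_cf_sccRestrict hE hS⟩
end

section
/- Let SF = (A,R) be a SETAF and let E ⊆ A be such that for every S ∈ SCCs(SF), (E ∩ S) ∈ adm(SF↓_{UP_SF(S,E)}^{(E∖S)⁺_R}, U_SF(S,E), M_SF(S,E)). Let S' ∈ SCCs(SF) and let a ∈ U_SF(S',E) be acceptable w.r.t. (E ∩ S') in SF↓_{UP_SF(S',E)}^{(E∖S')⁺_R} considering M_SF(S',E). Then a is acceptable w.r.t. E in SF (i.e., E defends a in SF). -/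
/-! Let `(T, a)` be an attack. If `E \ S'` already hits `T`, we are done. Otherwise, if `T` meets
`S'`, its trace on the restriction is an attack on `a` there, so it is countered by some `(X, t)`
with `X ⊆ E` that is not mitigated; not being mitigated means that `X` extends by arguments of `E`
to a tail of `SF` attacking `t`. If `T` avoids `S'` and `E` did not hit `T`, then `a` would be
provisionally defeated, contradicting `a ∈ U(S', E)`. -/

namespace SETAF

variable {α : Type*} {SF : SETAF α}

theorem attacksArg_mono {X Y : Set α} {t : α} (hXY : X ⊆ Y) (hX : SF.attacksArg X t) :
    SF.attacksArg Y t :=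
  let ⟨T, hTX, hTR⟩ := hX
  ⟨T, hTX.trans hXY, hTR⟩

theorem attacksSet_mono {X X' Y Y' : Set α} (hX : X ⊆ X') (hY : Y ⊆ Y')
    (h : SF.attacksSet X Y) : SF.attacksSet X' Y' :=
  let ⟨t, htY, ht⟩ := h
  ⟨t, hY htY, attacksArg_mono hX ht⟩

theorem UPscc_eq_diff_Dscc (S E : Set α) : SF.UPscc S E = S \ SF.Dscc S E := by
  ext t
  simp only [UPscc, Uscc, Pscc, Set.mem_union, Set.mem_sdiff, Set.mem_ofPred_eq]
  tauto

theorem not_attacksArg_of_mem_Uscc {S E : Set α} {a : α} (ha : a ∈ SF.Uscc S E) :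
    ¬ SF.attacksArg (SF.A \ (S ∪ SF.plus E)) a := fun hatt =>
  ha.2 <| by
    by_cases hD : a ∈ SF.Dscc S E
    · exact Or.inl hD
    · exact Or.inr ⟨⟨ha.1, hatt⟩, hD⟩

theorem inter_mem_restrict_R {D S T : Set α} {h t : α} (hTR : (T, h) ∈ SF.R)
    (hh : h ∈ (SF.A ∩ S) \ D) (hTD : T ∩ D = ∅) (htT : t ∈ T) (htS : t ∈ S) (htD : t ∉ D) :
    (T ∩ ((SF.A ∩ S) \ D), h) ∈ (SF.restrict D S).R :=
  ⟨T, h, hTR, hh, hTD, ⟨t, htT, ⟨SF.tail_subset _ hTR htT, htS⟩, htD⟩, rfl⟩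

theorem attacksArg_of_notMem_Mscc {S E X : Set α} {t : α}
    (hXR : (X, t) ∈ (SF.restrict (SF.plus (E \ S)) (SF.UPscc S E)).R)
    (hXM : (X, t) ∉ SF.Mscc S E) (hXE : X ⊆ E) : SF.attacksArg E t := by
  obtain ⟨T', hT'R, -, hT'E⟩ : ∃ T', (T', t) ∈ SF.R ∧ X ⊆ T' ∧ T' \ X ⊆ E := by
    by_contra! hno
    exact hXM ⟨hXR, hno⟩
  refine ⟨T', fun x hx => ?_, hT'R⟩
  by_cases hxX : x ∈ X
  · exact hXE hxX
  · exact hT'E ⟨hx, hxX⟩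

theorem attacksSet_of_acceptableM {S E T : Set α} {a : α} (ha : a ∈ SF.Uscc S E)
    (hacc : (SF.restrict (SF.plus (E \ S)) (SF.UPscc S E)).acceptableM
      (SF.Mscc S E) (E ∩ S) a)
    (hTR : (T, a) ∈ SF.R) (hTS : (T ∩ S).Nonempty) (hES : ¬ SF.attacksSet (E \ S) T) :
    SF.attacksSet E T := by
  obtain ⟨t₀, ht₀T, ht₀S⟩ := hTS
  have hTD : T ∩ SF.plus (E \ S) = ∅ :=
    Set.eq_empty_of_forall_notMem fun t ⟨htT, ht⟩ => hES ⟨t, htT, ht⟩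
  have haUP : a ∈ SF.UPscc S E := Or.inl ha
  have haD : a ∉ SF.plus (E \ S) := fun hD => ha.2 (Or.inl ⟨ha.1, hD⟩)
  have ht₀UP : t₀ ∈ SF.UPscc S E := by
    rw [UPscc_eq_diff_Dscc]
    exact ⟨ht₀S, fun hD => hES ⟨t₀, ht₀T, hD.2⟩⟩
  obtain ⟨X, t, hXR, hXM, hXE, htT⟩ := hacc _ <|
    inter_mem_restrict_R hTR ⟨⟨SF.head_mem _ hTR, haUP⟩, haD⟩ hTD ht₀T ht₀UP
      fun hD => hES ⟨t₀, ht₀T, hD⟩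
  exact ⟨t, htT.1, attacksArg_of_notMem_Mscc hXR hXM (hXE.trans Set.inter_subset_left)⟩

theorem attacksSet_of_mem_Uscc {S E T : Set α} {a : α} (ha : a ∈ SF.Uscc S E)
    (hTR : (T, a) ∈ SF.R) (hTS : T ∩ S = ∅) : SF.attacksSet E T := by
  by_contra hET
  refine not_attacksArg_of_mem_Uscc ha ⟨T, fun t ht => ⟨SF.tail_subset _ hTR ht, ?_⟩, hTR⟩
  rintro (htS | htE)
  · exact Set.eq_empty_iff_forall_notMem.mp hTS t ⟨ht, htS⟩
  · exact hET ⟨t, ht, htE⟩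

end SETAF

open SETAF in
theorem stmt17_general {α : Type*} (SF : SETAF α) (E : Set α)
    (S' : Set α)
    (a : α) (ha : a ∈ SF.Uscc S' E)
    (hacc : (SF.restrict (SF.plus (E \ S')) (SF.UPscc S' E)).acceptableM
      (SF.Mscc S' E) (E ∩ S') a) :
    SF.defends E a := by
  rintro B - ⟨T, hTB, hTR⟩
  refine attacksSet_mono subset_rfl hTB ?_
  by_cases hES : SF.attacksSet (E \ S') T
  · exact attacksSet_mono Set.sdiff_subset subset_rfl hES
  by_cases hTS : (T ∩ S').Nonempty
  · exact attacksSet_of_acceptableM ha hacc hTR hTS hES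
  · exact attacksSet_of_mem_Uscc ha hTR (Set.not_nonempty_iff_eq_empty.mp hTS)

/-- Lemma 5: local acceptability implies global acceptability. -/
theorem stmt17 {α : Type*} (SF : SETAF α) (E : Set α) (hE : E ⊆ SF.A)
    (h : ∀ S ∈ SF.SCCs,
      E ∩ S ∈ (SF.restrict (SF.plus (E \ S)) (SF.UPscc S E)).admCM
        (SF.Uscc S E) (SF.Mscc S E))
    (S' : Set α) (hS' : S' ∈ SF.SCCs)
    (a : α) (ha : a ∈ SF.Uscc S' E)
    (hacc : (SF.restrict (SF.plus (E \ S')) (SF.UPscc S' E)).acceptableM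
      (SF.Mscc S' E) (E ∩ S') a) :
    SF.defends E a :=
  stmt17_general SF E S' a ha hacc
end
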